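/- Let G be a compact abelian Lie group and X a metrizable G-space that is a G-ANE. Then for every closed subgroup H ≤ G the invariant subspace X^{(H)} = G·X^H = {g·x : g ∈ G, x ∈ X^H}, equipped with the subspace topology and the restricted G-action, is a G-ANE. -/

import Mathlib

open scoped Manifold
open MulAction Set TopologicalSpace Topology

universe u v

/-- `G` is a compact Lie group: a compact topological group admitting a structure of a
finite-dimensional real smooth manifold in which multiplication and inversion are smooth. -/
def IsCompactLieGroup (G : Type*) [Group G] [TopologicalSpace G] : Prop :=
  CompactSpace G ∧ IsTopologicalGroup G ∧
    ∃ (n : ℕ) (cs : ChartedSpace (EuclideanSpace ℝ (Fin n)) G),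
      @LieGroup ℝ _ (EuclideanSpace ℝ (Fin n)) _ (EuclideanSpace ℝ (Fin n)) _ _ (𝓡 n) ((⊤ : ℕ∞) : WithTop ℕ∞) G _ _ cs

variable (G : Type u) [Group G] [TopologicalSpace G]

/-- A subset of a `G`-space is invariant if it is stable under the action. -/
def IsInvariantSet {Z : Type*} [SMul G Z] (A : Set Z) : Prop :=
  ∀ g : G, ∀ a ∈ A, g • a ∈ A

/-- A map is equivariant on a subset `A`. -/
def EquivariantOn {Z X : Type*} [SMul G Z] [SMul G X] (φ : Z → X) (A : Set Z) : Prop :=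
  ∀ g : G, ∀ a ∈ A, φ (g • a) = g • φ a

/-- The invariant subset `S` of the `G`-space `X`, with the subspace topology and restricted
action, is an equivariant absolute neighborhood extensor (`G`-ANE): every partial `G`-map from a
closed invariant subset of a metrizable `G`-space with values in `S` extends to a `G`-map of an
invariant neighborhood with values in `S`. -/
def IsGANESubset (X : Type v) [TopologicalSpace X] [MulAction G X] (S : Set X) : Prop :=
  ∀ (Z : Type u) [TopologicalSpace Z] [MulAction G Z], ContinuousSMul G Z →
    MetrizableSpace Z →
    ∀ A : Set Z, IsClosed A → IsInvariantSet G A →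
    ∀ φ : Z → X, ContinuousOn φ A → EquivariantOn G φ A → MapsTo φ A S →
    ∃ U : Set Z, IsOpen U ∧ IsInvariantSet G U ∧ A ⊆ U ∧
      ∃ ψ : Z → X, ContinuousOn ψ U ∧ EquivariantOn G ψ U ∧ MapsTo ψ U S ∧ EqOn ψ φ A

/-- The `G`-space `X` is an equivariant absolute neighborhood extensor (`G`-ANE). -/
def IsGANE (X : Type v) [TopologicalSpace X] [MulAction G X] : Prop :=
  IsGANESubset.{u, v} G X Set.univ

/-- The invariant subset `S` of the `G`-space `X` is an equivariant absolute extensor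
(`G`-AE): every partial `G`-map from a closed invariant subset of a metrizable `G`-space with
values in `S` extends to a `G`-map of the whole space with values in `S`. -/
def IsGAESubset (X : Type v) [TopologicalSpace X] [MulAction G X] (S : Set X) : Prop :=
  ∀ (Z : Type u) [TopologicalSpace Z] [MulAction G Z], ContinuousSMul G Z →
    MetrizableSpace Z →
    ∀ A : Set Z, IsClosed A → IsInvariantSet G A →
    ∀ φ : Z → X, ContinuousOn φ A → EquivariantOn G φ A → MapsTo φ A S →
    ∃ ψ : Z → X, Continuous ψ ∧ EquivariantOn G ψ Set.univ ∧ MapsTo ψ Set.univ S ∧ EqOn ψ φ A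

/-- A map is isovariant on `A`: it is equivariant there and preserves isotropy subgroups. -/
def IsovariantOn {Z X : Type*} [SMul G Z] [SMul G X] (φ : Z → X) (A : Set Z) : Prop :=
  EquivariantOn G φ A ∧ ∀ a ∈ A, ∀ g : G, g • a = a ↔ g • φ a = φ a

/-- The `G`-space `X` is an isovariant absolute extensor: every partial isovariant map from a
closed invariant subset of a metrizable `G`-space extends to an isovariant map of the whole
space. -/
def IsIsovAE (X : Type v) [TopologicalSpace X] [MulAction G X] : Prop :=
  ∀ (Z : Type u) [TopologicalSpace Z] [MulAction G Z], ContinuousSMul G Z →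
    MetrizableSpace Z →
    ∀ A : Set Z, IsClosed A → IsInvariantSet G A →
    ∀ φ : Z → X, ContinuousOn φ A → IsovariantOn G φ A →
    ∃ ψ : Z → X, Continuous ψ ∧ IsovariantOn G ψ Set.univ ∧ EqOn ψ φ A

/-- `(K) ≤ (H)`: the subgroup `K` is contained in some conjugate of `H`. -/
def SubConj (K H : Subgroup G) : Prop :=
  ∃ g : G, K ≤ Subgroup.map (MulAut.conj g).toMonoidHom H

/-- A family of orbit types: a conjugation-invariant set of closed subgroups of `G`. -/
def IsOrbitTypeFamily (𝒞 : Set (Subgroup G)) : Prop :=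
  (∀ H ∈ 𝒞, IsClosed (H : Set G)) ∧
    ∀ H ∈ 𝒞, ∀ g : G, Subgroup.map (MulAut.conj g).toMonoidHom H ∈ 𝒞

/-- The map induced on orbit spaces by an equivariant map. -/
def orbitMapOf {X Y : Type*} [MulAction G X] [MulAction G Y] (f : X → Y)
    (hf : ∀ (g : G) (x : X), f (g • x) = g • f x) :
    Quotient (orbitRel G X) → Quotient (orbitRel G Y) :=
  Quotient.map f (fun a b hab => by
    have hab' : a ∈ orbit G b := hab
    obtain ⟨g, rfl⟩ := hab'
    show f (g • b) ∈ orbit G (f b)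
    exact ⟨g, (hf g b).symm⟩)

/-- An equivariant continuous map is an equigeny if the induced map of orbit spaces is a
homeomorphism. -/
def IsEquigeny {X Y : Type*} [TopologicalSpace X] [TopologicalSpace Y]
    [MulAction G X] [MulAction G Y] (f : X → Y) : Prop :=
  Continuous f ∧ ∃ hf : ∀ (g : G) (x : X), f (g • x) = g • f x,
    IsHomeomorph (orbitMapOf G f hf)

/-- The `G`-space `X` is an equivariant absolute extensor (`G`-AE). -/
def IsGAE (X : Type v) [TopologicalSpace X] [MulAction G X] : Prop :=
  IsGAESubset.{u, v} G X Set.univ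

/-- The problem of extending the equigeny `h : 𝕏 → 𝕏'` over the ambient `G`-space `𝕐 ⊇ 𝕏`
(where `𝕏` sits in `𝕐` via the equivariant embedding `j`) has a `𝒞`-solution: there are a
`G`-space `𝕐'` of orbit type `𝒞`, a closed equivariant embedding `e : 𝕏' → 𝕐'` and an
equigeny `H : 𝕐 → 𝕐'` extending `h`. -/
def SolvesEquigenyExt (𝒞 : Set (Subgroup G))
    (𝕐 : Type u) [TopologicalSpace 𝕐] [MulAction G 𝕐]
    (𝕏 : Type u) [TopologicalSpace 𝕏] [MulAction G 𝕏] (j : 𝕏 → 𝕐)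
    (𝕏' : Type u) [TopologicalSpace 𝕏'] [MulAction G 𝕏'] (h : 𝕏 → 𝕏') : Prop :=
  ∃ (𝕐' : Type u) (_ : TopologicalSpace 𝕐') (_ : MulAction G 𝕐'),
    ContinuousSMul G 𝕐' ∧ (∀ y : 𝕐', MulAction.stabilizer G y ∈ 𝒞) ∧
    ∃ e : 𝕏' → 𝕐', IsClosedEmbedding e ∧ (∀ (g : G) (x : 𝕏'), e (g • x) = g • e x) ∧
      ∃ H : 𝕐 → 𝕐', IsEquigeny G H ∧ H ∘ j = e ∘ h

/-- Variant of `SolvesEquigenyExt` in which `𝕏'` is required to be embedded onto an *open*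
invariant subset of `𝕐'`. -/
def SolvesEquigenyExtOpen (𝒞 : Set (Subgroup G))
    (𝕐 : Type u) [TopologicalSpace 𝕐] [MulAction G 𝕐]
    (𝕏 : Type u) [TopologicalSpace 𝕏] [MulAction G 𝕏] (j : 𝕏 → 𝕐)
    (𝕏' : Type u) [TopologicalSpace 𝕏'] [MulAction G 𝕏'] (h : 𝕏 → 𝕏') : Prop :=
  ∃ (𝕐' : Type u) (_ : TopologicalSpace 𝕐') (_ : MulAction G 𝕐'),
    ContinuousSMul G 𝕐' ∧ (∀ y : 𝕐', MulAction.stabilizer G y ∈ 𝒞) ∧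
    ∃ e : 𝕏' → 𝕐', IsOpenEmbedding e ∧ IsInvariantSet G (Set.range e) ∧
      (∀ (g : G) (x : 𝕏'), e (g • x) = g • e x) ∧
      ∃ H : 𝕐 → 𝕐', IsEquigeny G H ∧ H ∘ j = e ∘ h

/-
Since `G` is abelian, `G • X^H = X^H`, and `G` acts on the orbit space `Z/H` of every `G`-space
`Z`. A partial `G`-map `A → X^H` is constant on `H`-orbits, so it descends to a partial `G`-map
on `A/H ⊆ Z/H`. As `H` is compact, `Z/H` is again metrizable: viewing each orbit as a (compact, hence
closed) subset of `Z` embeds `Z/H` into the closed subsets of `Z` with the Hausdorff metric. The `G`-ANE property of `X` extends the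
descended map over an invariant neighbourhood, and its composite with `Z → Z/H` is an extension
of the original map which is constant on `H`-orbits, hence takes values in `X^H`.
-/

open Filter Uniformity

namespace MulAction

section CommutingAction

variable {M K α : Type*} [Monoid M] [Group K] [MulAction M α] [MulAction K α]
  [SMulCommClass M K α]

instance : MulAction M (orbitRel.Quotient K α) where
  smul m := Quotient.map (m • ·) fun _ _ ⟨k, hk⟩ => ⟨k, by simp only [← hk, smul_comm]⟩
  one_smul q := Quotient.inductionOn' q fun a => congrArg Quotient.mk'' (one_smul M a)
  mul_smul m n q := Quotient.inductionOn' q fun a => congrArg Quotient.mk'' (mul_smul m n a)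

theorem orbitRel.Quotient.smul_mk (m : M) (a : α) :
    m • (Quotient.mk _ a : orbitRel.Quotient K α) = Quotient.mk _ (m • a) :=
  rfl

instance [TopologicalSpace M] [TopologicalSpace α] [ContinuousSMul M α]
    [ContinuousConstSMul K α] : ContinuousSMul M (orbitRel.Quotient K α) where
  continuous_smul :=
    (IsOpenQuotientMap.id.prodMap isOpenQuotientMap_quotientMk).continuous_comp_iff.mp
      (continuous_quot_mk.comp continuous_smul)

end CommutingAction

theorem orbitRel.Quotient.smul_eq_self_of_mem {G α : Type*} [CommGroup G] [MulAction G α]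
    {H : Subgroup G} {h : G} (hh : h ∈ H) (q : orbitRel.Quotient H α) : h • q = q :=
  Quotient.inductionOn' q fun _ => orbitRel.Quotient.quotient_smul_eq (g := (⟨h, hh⟩ : H))

theorem orbitRel.Quotient.preimage_image_mk {K α : Type*} [Group K] [MulAction K α] {A : Set α}
    (hA : ∀ k : K, ∀ a ∈ A, k • a ∈ A) :
    Quotient.mk (orbitRel K α) ⁻¹' (Quotient.mk _ '' A) = A := by
  refine Subset.antisymm ?_ (subset_preimage_image _ _)
  rintro z ⟨a, ha, haz⟩
  obtain ⟨k, rfl⟩ := Quotient.exact haz.symm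
  exact hA k a ha

section OrbitSpaceMetrizable

variable {K Z : Type*} [Group K] [MulAction K Z]

theorem mem_hausdorffEntourage_orbit {z y : Z} {u : SetRel Z Z}
    (h : ∀ k : K, (k • z, k • y) ∈ u) :
    (orbit K z, orbit K y) ∈ hausdorffEntourage u := by
  constructor
  · rintro _ ⟨k, rfl⟩
    exact ⟨k • y, mem_range_self k, h k⟩
  · rintro _ ⟨k, rfl⟩
    exact ⟨k • z, mem_range_self k, h k⟩

variable [TopologicalSpace K] [CompactSpace K]

theorem orbitRel.Quotient.isCompact_orbit [TopologicalSpace Z] [ContinuousSMul K Z]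
    (q : orbitRel.Quotient K Z) : IsCompact q.orbit := by
  induction q using Quotient.inductionOn' with | h z => ?_
  rw [orbitRel.Quotient.orbit_mk]
  exact isCompact_range (continuous_id.smul continuous_const)

variable [UniformSpace Z] [ContinuousSMul K Z]

theorem eventually_nhds_forall_smul_mem_uniformity (z : Z) {u : SetRel Z Z} (hu : u ∈ 𝓤 Z) :
    ∀ᶠ y in 𝓝 z, ∀ k : K, (k • z, k • y) ∈ u := by
  obtain ⟨v, hv, hvu⟩ :=
    isCompact_univ.mem_uniformity_of_prod (f := fun (y : Z) (k : K) => k • y)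
      (continuous_snd.smul continuous_fst).continuousOn (mem_univ z) (symm_le_uniformity hu)
  rw [nhdsWithin_univ] at hv
  exact eventually_of_mem hv fun y hy k => hvu y hy k (mem_univ k)

variable [T2Space Z]

def orbitRel.Quotient.orbitCloseds (q : orbitRel.Quotient K Z) : Closeds Z :=
  ⟨q.orbit, q.isCompact_orbit.isClosed⟩

theorem orbitRel.Quotient.continuous_orbitCloseds :
    Continuous (orbitRel.Quotient.orbitCloseds (K := K) (Z := Z)) := by
  refine isOpenQuotientMap_quotientMk.continuous_comp_iff.mp
    (continuous_iff_continuousAt.mpr fun z => ?_)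
  refine (nhds_basis_uniformity' (𝓤 Z).basis_sets.uniformity_closeds).tendsto_right_iff.mpr
    fun u hu => ?_
  filter_upwards [eventually_nhds_forall_smul_mem_uniformity (K := K) z hu] with y hy
  exact mem_hausdorffEntourage_orbit hy

theorem orbitRel.Quotient.isEmbedding_orbitCloseds :
    IsEmbedding (orbitRel.Quotient.orbitCloseds (K := K) (Z := Z)) := by
  refine ⟨isInducing_iff_nhds.mpr fun q =>
      le_antisymm (continuous_orbitCloseds.tendsto q).le_comap ?_,
    fun q q' h => orbitRel.Quotient.orbit_injective (congrArg SetLike.coe h)⟩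
  induction q using Quotient.inductionOn' with | h z => ?_
  intro N hN
  rw [← isOpenQuotientMap_quotientMk.map_nhds_eq] at hN
  obtain ⟨u, hu, huN⟩ := UniformSpace.mem_nhds_iff.mp hN
  refine ((nhds_basis_uniformity' (𝓤 Z).basis_sets.uniformity_closeds).comap _).mem_iff.mpr
    ⟨u, hu, fun q hq => ?_⟩
  induction q using Quotient.inductionOn' with | h y => ?_
  -- `z` lies in its own orbit, so some `k • y` is `u`-close to `z`
  obtain ⟨_, ⟨k, rfl⟩, hk⟩ := hq.1 (mem_orbit_self z)
  have hky := huN hk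
  rwa [mem_preimage, orbitRel.Quotient.quotient_smul_eq] at hky

end OrbitSpaceMetrizable

theorem metrizableSpace_orbitRel_quotient {K Z : Type*} [Group K] [TopologicalSpace K]
    [CompactSpace K] [MulAction K Z] [TopologicalSpace Z] [MetrizableSpace Z]
    [ContinuousSMul K Z] : MetrizableSpace (orbitRel.Quotient K Z) :=
  letI := metrizableSpaceMetric Z
  orbitRel.Quotient.isEmbedding_orbitCloseds.metrizableSpace

end MulAction

theorem IsOpenQuotientMap.continuousOn_of_comp {X Y W : Type*} [TopologicalSpace X]
    [TopologicalSpace Y] [TopologicalSpace W] {π : X → Y} (hπ : IsOpenQuotientMap π)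
    {f : Y → W} {s : Set Y} (h : ContinuousOn (f ∘ π) (π ⁻¹' s)) : ContinuousOn f s := by
  rw [continuousOn_iff_continuous_domRestrict] at h ⊢
  exact (hπ.restrictPreimage s).continuous_comp_iff.mp h

theorem exists_descent_to_orbitRel_quotient {G Z X : Type*} [CommGroup G] [TopologicalSpace G]
    [TopologicalSpace Z] [TopologicalSpace X] [MulAction G Z] [MulAction G X]
    [ContinuousSMul G Z] (H : Subgroup G) {A : Set Z} (hA : IsInvariantSet G A) {φ : Z → X}
    (hφc : ContinuousOn φ A) (hφe : EquivariantOn G φ A)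
    (hφH : MapsTo φ A (fixedPoints H X)) :
    ∃ φ' : orbitRel.Quotient H Z → X,
      ContinuousOn φ' (Quotient.mk _ '' A) ∧ EquivariantOn G φ' (Quotient.mk _ '' A) ∧
        ∀ a ∈ A, φ' (Quotient.mk _ a) = φ a := by
  have hφ' : ∀ a ∈ A, φ (Quotient.mk (orbitRel H Z) a).out = φ a := by
    intro a ha
    obtain ⟨⟨h, hh⟩, hout⟩ := Quotient.mk_out (s := orbitRel H Z) a
    rw [← hout]
    exact (hφe h a ha).trans (hφH ha ⟨h, hh⟩)
  refine ⟨fun q => φ q.out, ?_, ?_, hφ'⟩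
  · refine isOpenQuotientMap_quotientMk.continuousOn_of_comp ?_
    rw [orbitRel.Quotient.preimage_image_mk (K := H) fun k => hA k]
    exact hφc.congr hφ'
  · rintro g _ ⟨a, ha, rfl⟩
    simp only [orbitRel.Quotient.smul_mk, hφ' a ha, hφ' _ (hA g a ha), hφe g a ha]

theorem isGANESubset_fixedPoints {G : Type u} [CommGroup G] [TopologicalSpace G] [CompactSpace G]
    {X : Type v} [TopologicalSpace X] [MulAction G X] (hANE : IsGANE.{u, v} G X)
    {H : Subgroup G} (hH : IsClosed (H : Set G)) :
    IsGANESubset.{u, v} G X (fixedPoints H X) := by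
  intro Z _ _ _ _ A hAcl hA φ hφc hφe hφH
  have : CompactSpace H := isCompact_iff_compactSpace.mp hH.isCompact
  have : MetrizableSpace (orbitRel.Quotient H Z) := metrizableSpace_orbitRel_quotient
  have hπ := isOpenQuotientMap_quotientMk (Γ := H) (T := Z)
  set π := Quotient.mk (orbitRel H Z)
  have hsat : π ⁻¹' (π '' A) = A := orbitRel.Quotient.preimage_image_mk (K := H) fun k => hA k
  obtain ⟨φ', hφ'c, hφ'e, hφ'⟩ := exists_descent_to_orbitRel_quotient H hA hφc hφe hφH
  obtain ⟨U, hUo, hU, hAU, ψ, hψc, hψe, -, hψφ'⟩ :=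
    hANE _ inferInstance inferInstance (π '' A)
      (hπ.isQuotientMap.isClosed_preimage.mp (by rwa [hsat]))
      (by rintro g _ ⟨a, ha, rfl⟩; exact ⟨g • a, hA g a ha, rfl⟩)
      φ' hφ'c hφ'e (mapsTo_univ _ _)
  refine ⟨π ⁻¹' U, hUo.preimage hπ.continuous, fun g z hz => hU g (π z) hz,
    hsat ▸ preimage_mono hAU, ψ ∘ π,
    hψc.comp hπ.continuous.continuousOn (mapsTo_preimage _ _),
    fun g z hz => hψe g (π z) hz, fun z hz ⟨h, hh⟩ => ?_,
    fun a ha => (hψφ' (mem_image_of_mem π ha)).trans (hφ' a ha)⟩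
  rw [Function.comp_apply, Subgroup.mk_smul, ← hψe h (π z) hz,
    orbitRel.Quotient.smul_eq_self_of_mem hh]

theorem murayama_abelian_general (G : Type u) [CommGroup G] [TopologicalSpace G]
    (hG : IsCompactLieGroup G)
    (X : Type v) [TopologicalSpace X] [MulAction G X]
    (hANE : IsGANE.{u, v} G X)
    (H : Subgroup G) (hH : IsClosed (H : Set G)) :
    IsGANESubset.{u, v} G X
      {x : X | ∃ (g : G) (y : X), (∀ h ∈ H, h • y = y) ∧ x = g • y} := by
  have : CompactSpace G := hG.1
  have hfix : {x : X | ∃ (g : G) (y : X), (∀ h ∈ H, h • y = y) ∧ x = g • y} =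
      fixedPoints H X := by
    ext x
    refine ⟨?_, fun hx => ⟨1, x, fun h hh => hx ⟨h, hh⟩, (one_smul G x).symm⟩⟩
    rintro ⟨g, y, hy, rfl⟩ ⟨h, hh⟩
    rw [Subgroup.mk_smul, smul_comm, hy h hh]
  rw [hfix]
  exact isGANESubset_fixedPoints hANE hH

/-- **Murayama's theorem (abelian case).** If `G` is a compact abelian Lie group and `X` is a
metrizable `G`-space which is a `G`-ANE, then for every closed subgroup `H ≤ G` the invariant
subspace `X^{(H)} = G ⬝ X^H` is a `G`-ANE. -/
theorem murayama_abelian (G : Type u) [CommGroup G] [TopologicalSpace G]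
    (hG : IsCompactLieGroup G)
    (X : Type v) [TopologicalSpace X] [MulAction G X] [MetrizableSpace X]
    (hX : ContinuousSMul G X) (hANE : IsGANE.{u, v} G X)
    (H : Subgroup G) (hH : IsClosed (H : Set G)) :
    IsGANESubset.{u, v} G X
      {x : X | ∃ (g : G) (y : X), (∀ h ∈ H, h • y = y) ∧ x = g • y} :=
  murayama_abelian_general G hG X hANE H hH
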